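/- arXiv:2601.21753 — 3 statements merged into one kernel-verified Lean document; each statement's English description precedes it below -/
import Mathlib

section
/- Let ρ̄ : ℝ × ℝ → ℝ be continuously differentiable, and let l, r : ℝ → ℝ be differentiable functions with l(t) < r(t) for all t. Suppose the mass a(t) := ∫_{l(t)}^{r(t)} ρ̄(x, t) dx is positive for all t, and define the barycenter b(t) := (1/a(t)) ∫_{l(t)}^{r(t)} x·ρ̄(x, t) dx. Then b is differentiable and for all t, b'(t) = (1/a(t)) ∫_{l(t)}^{r(t)} (x − b(t))·∂_t ρ̄(x, t) dx + ((r(t) − b(t))·ρ̄(r(t), t)/a(t))·r'(t) − ((l(t) − b(t))·ρ̄(l(t), t)/a(t))·l'(t). -/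
open intervalIntegral

section AuxBarycenter
open MeasureTheory Filter Metric Asymptotics

variable {f : ℝ × ℝ → ℝ}

private lemma aux_contX (hf : Continuous f) (s : ℝ) : Continuous fun x => f (x, s) :=
  hf.comp (continuous_id.prodMk continuous_const)

private lemma aux_intble (hf : Continuous f) (s u v : ℝ) :
    IntervalIntegrable (fun x => f (x, s)) volume u v :=
  (aux_contX hf s).intervalIntegrable u v

private lemma aux_diffT (hf : ContDiff ℝ 1 f) (x s : ℝ) :
    DifferentiableAt ℝ (fun u => f (x, u)) s :=
  (hf.differentiable one_ne_zero (x, s)).comp s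
    (DifferentiableAt.prodMk (differentiableAt_const x) differentiableAt_id)

private lemma aux_deriv_eq (hf : ContDiff ℝ 1 f) (x s : ℝ) :
    deriv (fun u => f (x, u)) s = fderiv ℝ f (x, s) (0, 1) := by
  have h : HasDerivAt (fun u => f (x, u)) (fderiv ℝ f (x, s) (0, 1)) s := by
    have h1 : HasFDerivAt f (fderiv ℝ f (x, s)) (x, s) :=
      (hf.differentiable one_ne_zero (x, s)).hasFDerivAt
    have h2 : HasDerivAt (fun u => ((x : ℝ), u)) ((0 : ℝ), (1 : ℝ)) s :=
      HasDerivAt.prodMk (hasDerivAt_const s x) (hasDerivAt_id s)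
    exact h1.comp_hasDerivAt s h2
  exact h.deriv

private lemma aux_contDerivT (hf : ContDiff ℝ 1 f) (t : ℝ) :
    Continuous fun x => deriv (fun u => f (x, u)) t := by
  have h : (fun x => deriv (fun u => f (x, u)) t)
      = fun x => fderiv ℝ f (x, t) (0, 1) := funext fun x => aux_deriv_eq hf x t
  rw [h]
  exact ((hf.continuous_fderiv one_ne_zero).comp
    (continuous_id.prodMk continuous_const)).clm_apply continuous_const

/-- Fundamental theorem of calculus at a degenerate base interval, with a parameter. -/
private lemma key_fderiv (hf : Continuous f) (c s0 : ℝ) :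
    HasFDerivAt (fun p : ℝ × ℝ => ∫ x in c..p.1, f (x, p.2))
      (f (c, s0) • ContinuousLinearMap.fst ℝ ℝ ℝ) (c, s0) := by
  rw [hasFDerivAt_iff_isLittleO_nhds_zero]
  rw [isLittleO_iff]
  intro ε hε
  obtain ⟨δ, hδ, hcont⟩ := Metric.continuousAt_iff.1 hf.continuousAt ε hε
  filter_upwards [Metric.ball_mem_nhds (0 : ℝ × ℝ) hδ] with p hp
  have h1 : (∫ x in c..(c + p.1), f (x, s0 + p.2)) - (∫ x in c..c, f (x, s0))
      - (f (c, s0) • ContinuousLinearMap.fst ℝ ℝ ℝ) p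
      = ∫ x in c..(c + p.1), (f (x, s0 + p.2) - f (c, s0)) := by
    rw [intervalIntegral.integral_sub (aux_intble hf _ _ _)
      (intervalIntegrable_const), intervalIntegral.integral_const]
    simp [smul_eq_mul]
    ring
  simp only [Prod.fst_add, Prod.snd_add]
  rw [h1]
  have hd : ∀ x ∈ Set.uIoc c (c + p.1), ‖f (x, s0 + p.2) - f (c, s0)‖ ≤ ε := by
    intro x hx
    have hx' : |x - c| ≤ |c + p.1 - c| :=
      Set.abs_sub_left_of_mem_uIcc (Set.uIoc_subset_uIcc hx)
    have hdi : dist (x, s0 + p.2) (c, s0) < δ := by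
      rw [mem_ball, Prod.dist_eq] at hp
      simp only [Prod.fst_zero, Prod.snd_zero, Real.dist_eq, sub_zero] at hp
      have h2 : |p.1| < δ := lt_of_le_of_lt (le_max_left _ _) hp
      have h3 : |p.2| < δ := lt_of_le_of_lt (le_max_right _ _) hp
      rw [Prod.dist_eq]
      simp only [Real.dist_eq, add_sub_cancel_left] at hx' ⊢
      exact max_lt (lt_of_le_of_lt hx' h2) h3
    exact le_of_lt (by simpa [Real.dist_eq] using hcont hdi)
  calc ‖∫ x in c..(c + p.1), (f (x, s0 + p.2) - f (c, s0))‖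
      ≤ ε * |c + p.1 - c| := intervalIntegral.norm_integral_le_of_norm_le_const hd
    _ ≤ ε * ‖p‖ := by
        rw [add_sub_cancel_left]
        exact mul_le_mul_of_nonneg_left (norm_fst_le p) (le_of_lt hε)

/-- Differentiation under the integral sign, fixed bounds. -/
private lemma param_hasDerivAt (hf : ContDiff ℝ 1 f) (a b t0 : ℝ) :
    HasDerivAt (fun s => ∫ x in a..b, f (x, s))
      (∫ x in a..b, deriv (fun u => f (x, u)) t0) t0 := by
  have hc : Continuous f := hf.continuous
  obtain ⟨C, hC⟩ : ∃ C, ∀ y ∈ (Set.uIcc a b ×ˢ Set.Icc (t0 - 1) (t0 + 1)),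
      ‖fderiv ℝ f y‖ ≤ C :=
    (isCompact_uIcc.prod isCompact_Icc).exists_bound_of_continuousOn
      ((hf.continuous_fderiv one_ne_zero).continuousOn)
  have key := intervalIntegral.hasDerivAt_integral_of_dominated_loc_of_deriv_le
    (F := fun s x => f (x, s)) (F' := fun s x => deriv (fun u => f (x, u)) s)
    (x₀ := t0) (bound := fun _ => C) (a := a) (b := b) (μ := volume)
    (s := Metric.ball t0 1) (Metric.ball_mem_nhds t0 one_pos)
    (Eventually.of_forall fun s => (aux_contX hc s).aestronglyMeasurable)
    (aux_intble hc t0 a b)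
    (aux_contDerivT hf t0).aestronglyMeasurable
    ?_ intervalIntegrable_const ?_
  · exact key.2
  · refine Eventually.of_forall fun x hx => fun s hs => ?_
    rw [aux_deriv_eq hf]
    calc ‖fderiv ℝ f (x, s) (0, 1)‖ ≤ ‖fderiv ℝ f (x, s)‖ * ‖((0 : ℝ), (1 : ℝ))‖ :=
          ContinuousLinearMap.le_opNorm _ _
      _ ≤ C := by
          have hn : ‖((0 : ℝ), (1 : ℝ))‖ = 1 := by
            simp [Prod.norm_def]
          rw [hn, mul_one]
          refine hC _ ⟨Set.uIoc_subset_uIcc hx, ?_⟩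
          rw [mem_ball, Real.dist_eq] at hs
          constructor <;> [linarith [neg_abs_le (s - t0)]; linarith [le_abs_self (s - t0)]]
  · exact Eventually.of_forall fun x _ => fun s _ => (aux_diffT hf x s).hasDerivAt

/-- Leibniz rule with moving boundaries. -/
private lemma moving_hasDerivAt (hf : ContDiff ℝ 1 f)
    {l r : ℝ → ℝ} (hl : Differentiable ℝ l) (hr : Differentiable ℝ r) (t : ℝ) :
    HasDerivAt (fun s => ∫ x in l s..r s, f (x, s))
      ((∫ x in l t..r t, deriv (fun u => f (x, u)) t)
        + f (r t, t) * deriv r t - f (l t, t) * deriv l t) t := by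
  have hc : Continuous f := hf.continuous
  have G1 := param_hasDerivAt hf (l t) (r t) t
  have inner_r : HasDerivAt (fun s => ((r s : ℝ), s)) ((deriv r t, 1)) t :=
    HasDerivAt.prodMk (hr t).hasDerivAt (hasDerivAt_id t)
  have inner_l : HasDerivAt (fun s => ((l s : ℝ), s)) ((deriv l t, 1)) t :=
    HasDerivAt.prodMk (hl t).hasDerivAt (hasDerivAt_id t)
  have G2 : HasDerivAt (fun s => ∫ x in r t..r s, f (x, s))
      (f (r t, t) * deriv r t) t := by
    have := HasFDerivAt.comp_hasDerivAt (f := fun s => ((r s : ℝ), s)) t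
      (key_fderiv hc (r t) t) inner_r
    simp at this; exact this
  have G3 : HasDerivAt (fun s => ∫ x in l t..l s, f (x, s))
      (f (l t, t) * deriv l t) t := by
    have := HasFDerivAt.comp_hasDerivAt (f := fun s => ((l s : ℝ), s)) t
      (key_fderiv hc (l t) t) inner_l
    simp at this; exact this
  have comb := (G1.add G2).sub G3
  have heq : ∀ s, ((∫ x in l t..r t, f (x, s)) + ∫ x in r t..r s, f (x, s))
      - ∫ x in l t..l s, f (x, s) = ∫ x in l s..r s, f (x, s) := by
    intro s
    rw [intervalIntegral.integral_add_adjacent_intervals (aux_intble hc s _ _)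
      (aux_intble hc s _ _),
      intervalIntegral.integral_interval_sub_left (aux_intble hc s _ _)
      (aux_intble hc s _ _)]
  exact comb.congr_of_eventuallyEq (Eventually.of_forall fun s => (heq s).symm)

end AuxBarycenter

/-- Derivative of the barycenter of a moving interval under a
time-varying density. -/
theorem barycenter_derivative_moving_boundary
    (ρ : ℝ × ℝ → ℝ) (hρ : ContDiff ℝ 1 ρ)
    (l r : ℝ → ℝ) (hl : Differentiable ℝ l) (hr : Differentiable ℝ r)
    (hlr : ∀ t : ℝ, l t < r t)
    (ha : ∀ t : ℝ, 0 < ∫ x in l t..r t, ρ (x, t)) :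
    Differentiable ℝ
      (fun t => (∫ x in l t..r t, ρ (x, t))⁻¹ * ∫ x in l t..r t, x * ρ (x, t)) ∧
    (∀ t : ℝ,
      deriv (fun t =>
          (∫ x in l t..r t, ρ (x, t))⁻¹ * ∫ x in l t..r t, x * ρ (x, t)) t
        = (∫ x in l t..r t, ρ (x, t))⁻¹ *
            (∫ x in l t..r t,
              (x - (∫ x in l t..r t, ρ (x, t))⁻¹ * ∫ x in l t..r t, x * ρ (x, t))
                * deriv (fun s => ρ (x, s)) t)
          + ((r t - (∫ x in l t..r t, ρ (x, t))⁻¹ * ∫ x in l t..r t, x * ρ (x, t))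
              * ρ (r t, t) / (∫ x in l t..r t, ρ (x, t))) * deriv r t
          - ((l t - (∫ x in l t..r t, ρ (x, t))⁻¹ * ∫ x in l t..r t, x * ρ (x, t))
              * ρ (l t, t) / (∫ x in l t..r t, ρ (x, t))) * deriv l t) := by
  have hg : ContDiff ℝ 1 (fun p : ℝ × ℝ => p.1 * ρ p) := contDiff_fst.mul hρ
  -- derivative of the mass
  have hA : ∀ t : ℝ, HasDerivAt (fun s => ∫ x in l s..r s, ρ (x, s))
      ((∫ x in l t..r t, deriv (fun u => ρ (x, u)) t)
        + ρ (r t, t) * deriv r t - ρ (l t, t) * deriv l t) t :=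
    fun t => moving_hasDerivAt hρ hl hr t
  -- derivative of the first moment
  have hB : ∀ t : ℝ, HasDerivAt (fun s => ∫ x in l s..r s, x * ρ (x, s))
      ((∫ x in l t..r t, x * deriv (fun u => ρ (x, u)) t)
        + (r t * ρ (r t, t)) * deriv r t - (l t * ρ (l t, t)) * deriv l t) t := by
    intro t
    have h := moving_hasDerivAt hg hl hr t
    have hre : (fun x : ℝ => deriv (fun u => (fun p : ℝ × ℝ => p.1 * ρ p) (x, u)) t)
        = fun x : ℝ => x * deriv (fun u => ρ (x, u)) t := by
      funext x
      exact deriv_const_mul x (aux_diffT hρ x t)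
    simp only [hre] at h
    exact h
  have hne : ∀ t : ℝ, (∫ x in l t..r t, ρ (x, t)) ≠ 0 := fun t => (ha t).ne'
  have hmul : ∀ t : ℝ, HasDerivAt
      (fun t => (∫ x in l t..r t, ρ (x, t))⁻¹ * ∫ x in l t..r t, x * ρ (x, t))
      (-((∫ x in l t..r t, deriv (fun u => ρ (x, u)) t)
          + ρ (r t, t) * deriv r t - ρ (l t, t) * deriv l t)
          / (∫ x in l t..r t, ρ (x, t)) ^ 2 * (∫ x in l t..r t, x * ρ (x, t))
        + (∫ x in l t..r t, ρ (x, t))⁻¹ *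
          ((∫ x in l t..r t, x * deriv (fun u => ρ (x, u)) t)
            + (r t * ρ (r t, t)) * deriv r t - (l t * ρ (l t, t)) * deriv l t)) t :=
    fun t => ((hA t).inv (hne t)).mul (hB t)
  refine ⟨fun t => (hmul t).differentiableAt, fun t => ?_⟩
  rw [(hmul t).deriv]
  set A := ∫ x in l t..r t, ρ (x, t) with hAdef
  set B := ∫ x in l t..r t, x * ρ (x, t) with hBdef
  set IA := ∫ x in l t..r t, deriv (fun u => ρ (x, u)) t with hIAdef
  set IB := ∫ x in l t..r t, x * deriv (fun u => ρ (x, u)) t with hIBdef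
  have hsub : (∫ x in l t..r t,
      (x - A⁻¹ * B) * deriv (fun s => ρ (x, s)) t) = IB - A⁻¹ * B * IA := by
    have h1 : IntervalIntegrable (fun x => x * deriv (fun u => ρ (x, u)) t)
        MeasureTheory.volume (l t) (r t) :=
      (continuous_id.mul (aux_contDerivT hρ t)).intervalIntegrable _ _
    have h2 : IntervalIntegrable (fun x => (A⁻¹ * B) * deriv (fun u => ρ (x, u)) t)
        MeasureTheory.volume (l t) (r t) :=
      (continuous_const.mul (aux_contDerivT hρ t)).intervalIntegrable _ _
    simp_rw [sub_mul]
    rw [intervalIntegral.integral_sub h1 h2, intervalIntegral.integral_const_mul]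
  rw [hsub]
  have hAne : A ≠ 0 := hne t
  field_simp
  ring
end

section
/- Let Ω = [α, β] ⊂ ℝ, let ρ̄ : ℝ → ℝ be continuous, let N ≥ 1, and let α ≤ p_1 < ⋯ < p_N ≤ β be fixed. For φ ∈ ℝ^N define the cell boundaries r_0(φ) := α, r_N(φ) := β, and r_j(φ) := (p_j + p_{j+1})/2 + (φ_j − φ_{j+1})/(p_{j+1} − p_j) for 1 ≤ j ≤ N−1, and define F(φ) := Σ_{j=1}^N [ ∫_{r_{j−1}(φ)}^{r_j(φ)} (1/2)(p_j − x)² ρ̄(x) dx + (1/N − ∫_{r_{j−1}(φ)}^{r_j(φ)} ρ̄(x) dx)·φ_j ]. Then for every index i, the map φ_i ↦ F(φ) (other coordinates fixed) is differentiable with derivative ∂F/∂φ_i = 1/N − ∫_{r_{i−1}(φ)}^{r_i(φ)} ρ̄(x) dx; the boundary terms arising from the φ-dependence of the integration limits cancel because (1/2)(p_i − r_i)² − φ_i = (1/2)(p_{i+1} − r_i)² − φ_{i+1} at each interior boundary r_i. -/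
open intervalIntegral

/-- Cell boundaries of the one-dimensional Laguerre tessellation on
`Ω = [α, β]` for agents `p 1 < … < p N` with dual weights `φ`:
`r 0 = α`, `r N = β`, and
`r j = (p j + p (j+1))/2 + (φ j - φ (j+1))/(p (j+1) - p j)` for `1 ≤ j ≤ N-1`. -/
noncomputable def lagBdry (α β : ℝ) (N : ℕ) (p φ : ℕ → ℝ) (j : ℕ) : ℝ :=
  if j = 0 then α
  else if j = N then β
  else (p j + p (j + 1)) / 2 + (φ j - φ (j + 1)) / (p (j + 1) - p j)

/-- The semi-discrete Kantorovich dual objective in one dimension. -/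
noncomputable def lagDualObj (α β : ℝ) (ρ : ℝ → ℝ) (N : ℕ) (p φ : ℕ → ℝ) : ℝ :=
  ∑ j ∈ Finset.Icc 1 N,
    ((∫ x in lagBdry α β N p φ (j - 1)..lagBdry α β N p φ j,
        (1 / 2 : ℝ) * (p j - x) ^ 2 * ρ x)
      + (1 / (N : ℝ)
          - ∫ x in lagBdry α β N p φ (j - 1)..lagBdry α β N p φ j, ρ x) * φ j)

lemma hasDerivAt_ite_update (c : Prop) [Decidable c] (k x : ℝ) :
    HasDerivAt (fun s : ℝ => if c then s else k) (if c then 1 else 0) x := by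
  by_cases h : c
  · simpa [h] using hasDerivAt_id' x
  · simpa [h] using hasDerivAt_const x k

lemma int_deriv (f : ℝ → ℝ) (hf : Continuous f) {u : ℝ → ℝ} {u' s : ℝ} (c : ℝ)
    (hu : HasDerivAt u u' s) :
    HasDerivAt (fun t => ∫ x in c..u t, f x) (f (u s) * u') s := by
  have h := (intervalIntegral.integral_hasDerivAt_right
    (hf.intervalIntegrable c (u s))
    (hf.stronglyMeasurableAtFilter _ _) hf.continuousAt).comp s hu
  simpa [Function.comp_def] using h

lemma int_deriv2 (f : ℝ → ℝ) (hf : Continuous f) {L R : ℝ → ℝ} {L' R' s : ℝ}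
    (hL : HasDerivAt L L' s) (hR : HasDerivAt R R' s) :
    HasDerivAt (fun t => ∫ x in L t..R t, f x) (f (R s) * R' - f (L s) * L') s := by
  have h : ∀ t, (∫ x in L t..R t, f x)
      = (∫ x in (0:ℝ)..R t, f x) - ∫ x in (0:ℝ)..L t, f x := fun t =>
    (intervalIntegral.integral_interval_sub_left (hf.intervalIntegrable _ _)
      (hf.intervalIntegrable _ _)).symm
  simpa [h] using (int_deriv f hf 0 hR).fun_sub (int_deriv f hf 0 hL)

lemma lag_key (pj pj1 fj fj1 : ℝ) (h : pj < pj1) :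
    (1/2 : ℝ) * (pj - ((pj + pj1)/2 + (fj - fj1)/(pj1 - pj)))^2 - fj
      = (1/2 : ℝ) * (pj1 - ((pj + pj1)/2 + (fj - fj1)/(pj1 - pj)))^2 - fj1 := by
  have h' : pj1 - pj ≠ 0 := sub_ne_zero.mpr (ne_of_gt h)
  field_simp
  ring

/-- Dual gradient formula: `∂F/∂φ_i = 1/N - a_i`, the boundary terms
arising from the `φ`-dependence of the integration limits cancel. -/
theorem dual_objective_partial_phi
    (α β : ℝ) (ρ : ℝ → ℝ) (hρ : Continuous ρ)
    (N : ℕ) (hN : 1 ≤ N) (p : ℕ → ℝ)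
    (hαp : α ≤ p 1) (hpβ : p N ≤ β)
    (hord : ∀ j ∈ Finset.Icc 1 (N - 1), p j < p (j + 1))
    (φ : ℕ → ℝ) (i : ℕ) (hi : i ∈ Finset.Icc 1 N) :
    HasDerivAt (fun s : ℝ => lagDualObj α β ρ N p (Function.update φ i s))
      (1 / (N : ℝ)
        - ∫ x in lagBdry α β N p φ (i - 1)..lagBdry α β N p φ i, ρ x)
      (φ i) := by
  simp only [Finset.mem_Icc] at hi
  set r : ℕ → ℝ := lagBdry α β N p φ with hr
  set d : ℕ → ℝ := fun j => if j = 0 then 0 else if j = N then 0 else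
      ((if j = i then (1:ℝ) else 0) - (if j + 1 = i then 1 else 0)) / (p (j+1) - p j)
    with hd
  -- derivatives of the cell boundaries
  have hB : ∀ j, HasDerivAt (fun s => lagBdry α β N p (Function.update φ i s) j)
      (d j) (φ i) := by
    intro j
    by_cases h0 : j = 0
    · simpa [lagBdry, h0, hd] using hasDerivAt_const (φ i) α
    by_cases hNj : j = N
    · have hN0 : N ≠ 0 := by omega
      simpa [lagBdry, h0, hNj, hN0, hd] using hasDerivAt_const (φ i) β
    simp only [lagBdry, h0, hNj, if_false, hd, Function.update_apply]
    exact (((hasDerivAt_ite_update _ _ _).sub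
      (hasDerivAt_ite_update _ _ _)).div_const _).const_add _
  set T : ℕ → ℝ → ℝ := fun j x => (1 / 2 : ℝ) * (p j - x) ^ 2 * ρ x with hT
  have hTc : ∀ j, Continuous (T j) := by
    intro j
    exact (continuous_const.mul ((continuous_const.sub continuous_id).pow 2)).mul hρ
  set D : ℕ → ℝ := fun j =>
      (T j (r j) * d j - T j (r (j-1)) * d (j-1))
        + (-(ρ (r j) * d j - ρ (r (j-1)) * d (j-1)) * φ j
            + (1/(N:ℝ) - ∫ x in r (j-1)..r j, ρ x) * (if j = i then 1 else 0))
    with hD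
  have hterm : ∀ j ∈ Finset.Icc 1 N,
      HasDerivAt (fun s : ℝ =>
        (∫ x in lagBdry α β N p (Function.update φ i s) (j - 1)..
            lagBdry α β N p (Function.update φ i s) j,
          (1 / 2 : ℝ) * (p j - x) ^ 2 * ρ x)
        + (1 / (N : ℝ)
            - ∫ x in lagBdry α β N p (Function.update φ i s) (j - 1)..
                lagBdry α β N p (Function.update φ i s) j, ρ x)
          * Function.update φ i s j) (D j) (φ i) := by
    intro j _
    have h1 := int_deriv2 (T j) (hTc j) (hB (j-1)) (hB j)
    have h2 := (int_deriv2 ρ hρ (hB (j-1)) (hB j)).const_sub (1/(N:ℝ))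
    have h3 : HasDerivAt (fun s : ℝ => Function.update φ i s j)
        (if j = i then 1 else 0) (φ i) := by
      simp only [Function.update_apply]
      exact hasDerivAt_ite_update _ _ _
    have := h1.fun_add (h2.fun_mul h3)
    simpa [Function.update_eq_self, hD, hT, hr] using this
  have hsum := HasDerivAt.fun_sum hterm
  -- now identify the sum of derivatives
  set E : ℕ → ℝ → ℝ := fun j x => ((1/2 : ℝ)*(p j - x)^2 - φ j) * ρ x with hE
  set K : ℕ → ℝ := fun j => E (j+1) (r j) * d j with hK
  have hd0 : d 0 = 0 := by simp [hd]
  have hdN : d N = 0 := by simp [hd]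
  have hkey : ∀ j, 1 ≤ j → j < N → E j (r j) = E (j+1) (r j) := by
    intro j h1 h2
    have hp : p j < p (j+1) := hord j (by simp [Finset.mem_Icc]; omega)
    have hj0 : j ≠ 0 := by omega
    have hjN : j ≠ N := by omega
    have hrj : r j = (p j + p (j + 1)) / 2 + (φ j - φ (j + 1)) / (p (j + 1) - p j) := by
      simp [hr, lagBdry, hj0, hjN]
    simp only [hE, hrj]
    rw [lag_key _ _ _ _ hp]
  have hDj : ∀ j ∈ Finset.Icc 1 N, D j = (K j - K (j-1))
      + (if j = i then (1/(N:ℝ) - ∫ x in r (j-1)..r j, ρ x) else 0) := by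
    intro j hj
    simp only [Finset.mem_Icc] at hj
    have hb : E j (r (j-1)) * d (j-1) = K (j-1) := by
      simp only [hK]
      rw [Nat.sub_add_cancel hj.1]
    have ha : E j (r j) * d j = K j := by
      rcases eq_or_lt_of_le hj.2 with hNe | hlt
      · have hdj : d j = 0 := by rw [hNe]; exact hdN
        simp [hK, hdj]
      · simp only [hK]
        rw [hkey j hj.1 hlt]
    rw [← ha, ← hb]
    simp only [hD, hE, hT]
    by_cases hji : j = i <;> simp [hji] <;> ring
  have htel : ∀ M : ℕ, ∑ j ∈ Finset.Icc 1 M, (K j - K (j-1)) = K M - K 0 := by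
    intro M
    induction M with
    | zero => simp
    | succ n ih =>
      rw [Finset.sum_Icc_succ_top (by omega), ih]
      simp only [Nat.add_sub_cancel]
      ring
  have hDsum : ∑ j ∈ Finset.Icc 1 N, D j
      = 1/(N:ℝ) - ∫ x in r (i-1)..r i, ρ x := by
    rw [Finset.sum_congr rfl hDj, Finset.sum_add_distrib, htel N,
      Finset.sum_ite_eq' (Finset.Icc 1 N) i]
    have hKN : K N = 0 := by simp [hK, hdN]
    have hK0 : K 0 = 0 := by simp [hK, hd0]
    simp [hKN, hK0, Finset.mem_Icc, hi.1, hi.2]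
  rw [← hDsum]
  simpa only [lagDualObj] using hsum
end

section
/- Let Ω = [α, β] ⊂ ℝ, let ρ̄ : ℝ → ℝ be continuous, let N ≥ 1, and fix weights φ ∈ ℝ^N. For positions α ≤ p_1 < ⋯ < p_N ≤ β define the cell boundaries r_0 := α, r_N := β, and r_j := (p_j + p_{j+1})/2 + (φ_j − φ_{j+1})/(p_{j+1} − p_j) for 1 ≤ j ≤ N−1, and define F(p) := Σ_{j=1}^N [ ∫_{r_{j−1}}^{r_j} (1/2)(p_j − x)² ρ̄(x) dx + (1/N − ∫_{r_{j−1}}^{r_j} ρ̄(x) dx)·φ_j ]. Then for every index i, the map p_i ↦ F(p) (other coordinates fixed, maintaining the strict ordering) is differentiable with derivative ∂F/∂p_i = ∫_{r_{i−1}}^{r_i} (p_i − x) ρ̄(x) dx = a_i·(p_i − b_i), where a_i := ∫_{r_{i−1}}^{r_i} ρ̄(x) dx and, when a_i ≠ 0, b_i := (1/a_i) ∫_{r_{i−1}}^{r_i} x ρ̄(x) dx; the boundary terms arising from the p_i-dependence of the integration limits cancel because the integrand values of adjacent cells agree at the shared boundaries. -/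
open intervalIntegral

open MeasureTheory

noncomputable def lagG (α : ℝ) (ρ : ℝ → ℝ) (k : ℕ) (t : ℝ) : ℝ := ∫ x in α..t, x ^ k * ρ x

noncomputable def lagGd (N : ℕ) (p φ : ℕ → ℝ) (i j : ℕ) : ℝ :=
  if j = 0 ∨ j = N then 0
  else if j = i then 1/2 + (φ i - φ (i+1)) / (p (i+1) - p i)^2
  else if j + 1 = i then 1/2 - (φ j - φ i) / (p i - p j)^2
  else 0

section

variable {α : ℝ} {ρ : ℝ → ℝ}

lemma lagInt (hρ : Continuous ρ) (k : ℕ) (u v : ℝ) :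
    IntervalIntegrable (fun x => x ^ k * ρ x) volume u v :=
  ((continuous_pow k).mul hρ).intervalIntegrable u v

lemma lagG_deriv (hρ : Continuous ρ) (k : ℕ) (t : ℝ) :
    HasDerivAt (lagG α ρ k) (t ^ k * ρ t) t :=
  intervalIntegral.integral_hasDerivAt_right (lagInt hρ k α t)
    (((continuous_pow k).mul hρ).stronglyMeasurable.stronglyMeasurableAtFilter)
    ((continuous_pow k).mul hρ).continuousAt

lemma lagKeyk (hρ : Continuous ρ) (k : ℕ) (u v : ℝ) :
    (∫ x in u..v, x ^ k * ρ x) = lagG α ρ k v - lagG α ρ k u :=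
  (intervalIntegral.integral_interval_sub_left (lagInt hρ k α v) (lagInt hρ k α u)).symm

lemma lagKeyB (hρ : Continuous ρ) (u v : ℝ) :
    (∫ x in u..v, ρ x) = lagG α ρ 0 v - lagG α ρ 0 u := by
  rw [← lagKeyk hρ 0 u v]; simp

lemma lagKeyC (hρ : Continuous ρ) (u v q : ℝ) :
    (∫ x in u..v, (q - x) * ρ x)
      = q * (lagG α ρ 0 v - lagG α ρ 0 u) - (lagG α ρ 1 v - lagG α ρ 1 u) := by
  rw [← lagKeyk hρ 0 u v, ← lagKeyk hρ 1 u v,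
    show (fun x => (q - x) * ρ x) = fun x => q * (x ^ 0 * ρ x) - x ^ 1 * ρ x from
      funext fun x => by ring,
    intervalIntegral.integral_sub ((lagInt hρ 0 u v).const_mul q) (lagInt hρ 1 u v),
    intervalIntegral.integral_const_mul]

lemma lagKeyA (hρ : Continuous ρ) (u v q : ℝ) :
    (∫ x in u..v, (1 / 2 : ℝ) * (q - x) ^ 2 * ρ x)
      = q ^ 2 / 2 * (lagG α ρ 0 v - lagG α ρ 0 u) - q * (lagG α ρ 1 v - lagG α ρ 1 u)
        + (lagG α ρ 2 v - lagG α ρ 2 u) / 2 := by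
  rw [← lagKeyk hρ 0 u v, ← lagKeyk hρ 1 u v, ← lagKeyk hρ 2 u v,
    show (fun x => (1 / 2 : ℝ) * (q - x) ^ 2 * ρ x)
        = fun x => (q ^ 2 / 2 * (x ^ 0 * ρ x) - q * (x ^ 1 * ρ x)) + (1/2) * (x ^ 2 * ρ x) from
      funext fun x => by ring,
    intervalIntegral.integral_add
      (((lagInt hρ 0 u v).const_mul _).sub ((lagInt hρ 1 u v).const_mul q))
      ((lagInt hρ 2 u v).const_mul _),
    intervalIntegral.integral_sub ((lagInt hρ 0 u v).const_mul _) ((lagInt hρ 1 u v).const_mul q),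
    intervalIntegral.integral_const_mul, intervalIntegral.integral_const_mul,
    intervalIntegral.integral_const_mul]
  ring

end

lemma bdry_deriv (α β : ℝ) (N : ℕ) (p φ : ℕ → ℝ) (i : ℕ) (hi1 : 1 ≤ i) (hiN : i ≤ N)
    (hord : ∀ j ∈ Finset.Icc 1 (N-1), p j < p (j+1)) (j : ℕ) :
    HasDerivAt (fun s => lagBdry α β N (Function.update p i s) φ j) (lagGd N p φ i j) (p i) := by
  rcases eq_or_ne j 0 with h0 | h0
  · subst h0
    simp only [lagBdry, if_pos rfl, lagGd, if_pos (Or.inl rfl)]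
    exact hasDerivAt_const _ _
  rcases eq_or_ne j N with hN | hN
  · simp only [lagBdry, if_neg h0, if_pos hN, lagGd, if_pos (Or.inr hN)]
    exact hasDerivAt_const _ _
  have hfun : (fun s => lagBdry α β N (Function.update p i s) φ j)
      = fun s => (Function.update p i s j + Function.update p i s (j+1)) / 2
          + (φ j - φ (j+1)) / (Function.update p i s (j+1) - Function.update p i s j) := by
    funext s; simp only [lagBdry, if_neg h0, if_neg hN]
  rw [hfun]
  simp only [lagGd, if_neg (by simp [h0, hN] : ¬(j = 0 ∨ j = N))]
  rcases eq_or_ne j i with hji | hji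
  · subst hji
    rw [if_pos rfl]
    have hlt : p j < p (j+1) := hord j (Finset.mem_Icc.mpr ⟨hi1, by omega⟩)
    have hne : p (j+1) - p j ≠ 0 := sub_ne_zero.mpr hlt.ne'
    simp only [Function.update_self, Function.update_of_ne (show j + 1 ≠ j by omega)]
    have h1 : HasDerivAt (fun s : ℝ => (s + p (j+1)) / 2
        + (φ j - φ (j+1)) / (p (j+1) - s))
        ((1 : ℝ) / 2 + (0 * (p (j+1) - p j) - (φ j - φ (j+1)) * (0 - 1)) / (p (j+1) - p j)^2)
        (p j) :=
      (((hasDerivAt_id (p j)).add_const _).div_const 2).add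
        (((hasDerivAt_const _ _).div ((hasDerivAt_const _ _).sub (hasDerivAt_id (p j))) hne))
    convert h1 using 1
    ring
  rcases eq_or_ne (j+1) i with hji1 | hji1
  · subst hji1
    rw [if_neg hji, if_pos rfl]
    have hlt : p j < p (j+1) := hord j (Finset.mem_Icc.mpr ⟨by omega, by omega⟩)
    have hne0 : p (j+1) - p j ≠ 0 := sub_ne_zero.mpr hlt.ne'
    simp only [Function.update_self, Function.update_of_ne (show j ≠ j + 1 by omega)]
    have h1 : HasDerivAt (fun s : ℝ => (p j + s) / 2 + (φ j - φ (j+1)) / (s - p j))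
        ((1 : ℝ) / 2 + (0 * (p (j+1) - p j) - (φ j - φ (j+1)) * 1) / (p (j+1) - p j)^2)
        (p (j+1)) :=
      (((hasDerivAt_id (p (j+1))).const_add _).div_const 2).add
        (((hasDerivAt_const _ _).div ((hasDerivAt_id (p (j+1))).sub_const _)
          (by simpa using hne0)))
    convert h1 using 1
    field_simp
    ring
  · rw [if_neg hji, if_neg hji1]
    simp only [Function.update_of_ne hji, Function.update_of_ne hji1]
    exact hasDerivAt_const _ _


/-- Primal gradient formula: `∂F/∂p_i = ∫_{V_i} (p_i - x) ρ̄(x) dx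
= a_i (p_i - b_i)`; the boundary terms arising from the
`p_i`-dependence of the integration limits cancel. -/
theorem dual_objective_partial_p
    (α β : ℝ) (ρ : ℝ → ℝ) (hρ : Continuous ρ)
    (N : ℕ) (hN : 1 ≤ N) (p : ℕ → ℝ)
    (hαp : α ≤ p 1) (hpβ : p N ≤ β)
    (hord : ∀ j ∈ Finset.Icc 1 (N - 1), p j < p (j + 1))
    (φ : ℕ → ℝ) (i : ℕ) (hi : i ∈ Finset.Icc 1 N) :
    HasDerivAt (fun s : ℝ => lagDualObj α β ρ N (Function.update p i s) φ)
      (∫ x in lagBdry α β N p φ (i - 1)..lagBdry α β N p φ i, (p i - x) * ρ x)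
      (p i) ∧
    ((∫ x in lagBdry α β N p φ (i - 1)..lagBdry α β N p φ i, ρ x) ≠ 0 →
      (∫ x in lagBdry α β N p φ (i - 1)..lagBdry α β N p φ i, (p i - x) * ρ x)
        = (∫ x in lagBdry α β N p φ (i - 1)..lagBdry α β N p φ i, ρ x)
          * (p i
            - (∫ x in lagBdry α β N p φ (i - 1)..lagBdry α β N p φ i, ρ x)⁻¹
              * ∫ x in lagBdry α β N p φ (i - 1)..lagBdry α β N p φ i, x * ρ x)) := by
  obtain ⟨hi1, hiN⟩ := Finset.mem_Icc.mp hi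
  have hgv : ∀ m, lagBdry α β N (Function.update p i (p i)) φ m = lagBdry α β N p φ m := by
    intro m; rw [Function.update_eq_self]
  constructor
  · -- derivative claim
    set r : ℕ → ℝ := lagBdry α β N p φ with hr
    set d : ℕ → ℝ := fun j =>
      (if j = i then 1 else 0) * (p j * (lagG α ρ 0 (r j) - lagG α ρ 0 (r (j-1)))
          - (lagG α ρ 1 (r j) - lagG α ρ 1 (r (j-1))))
      + lagGd N p φ i j * ρ (r j) * ((p j - r j)^2/2 - φ j)
      - lagGd N p φ i (j-1) * ρ (r (j-1)) * ((p j - r (j-1))^2/2 - φ j) with hd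
    have hsum : ∑ j ∈ Finset.Icc 1 N, d j
        = ∫ x in r (i-1)..r i, (p i - x) * ρ x := by
      set c : ℕ → ℝ := fun k =>
        lagGd N p φ i k * ρ (r k) * ((p (k+1) - r k)^2/2 - φ (k+1)) with hc
      have hident : ∀ j, 1 ≤ j → j < N →
          ((p j - r j)^2/2 - φ j) = ((p (j+1) - r j)^2/2 - φ (j+1)) := by
        intro j hj1 hjN
        have hlt : p j < p (j+1) := hord j (Finset.mem_Icc.mpr ⟨hj1, by omega⟩)
        have hne : p (j+1) - p j ≠ 0 := sub_ne_zero.mpr hlt.ne'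
        have hrj : r j = (p j + p (j + 1)) / 2 + (φ j - φ (j + 1)) / (p (j + 1) - p j) := by
          rw [hr]; simp only [lagBdry, if_neg (by omega : j ≠ 0), if_neg (by omega : j ≠ N)]
        rw [hrj]
        field_simp
        ring
      have hstep : ∀ j ∈ Finset.Icc 1 N, d j
          = (if j = i then p j * (lagG α ρ 0 (r j) - lagG α ρ 0 (r (j-1)))
              - (lagG α ρ 1 (r j) - lagG α ρ 1 (r (j-1))) else 0)
            + (c j - c (j-1)) := by
        intro j hj
        obtain ⟨hj1, hjN⟩ := Finset.mem_Icc.mp hj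
        have hcz : c (j-1) = lagGd N p φ i (j-1) * ρ (r (j-1)) * ((p j - r (j-1))^2/2 - φ j) := by
          rw [hc]
          simp only []
          rw [show j - 1 + 1 = j by omega]
        have hcy : lagGd N p φ i j * ρ (r j) * ((p j - r j)^2/2 - φ j) = c j := by
          rcases eq_or_ne j N with h | h
          · have : lagGd N p φ i j = 0 := by simp [lagGd, h]
            rw [hc]; simp only []
            rw [this]; ring
          · rw [hident j hj1 (by omega)]
        rw [hd]
        simp only []
        rw [hcz, hcy, ite_mul, one_mul, zero_mul]
        ring
      rw [Finset.sum_congr rfl hstep, Finset.sum_add_distrib,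
        Finset.sum_ite_eq' (Finset.Icc 1 N) i, if_pos hi]
      have htel : ∑ j ∈ Finset.Icc 1 N, (c j - c (j-1)) = c N - c 0 := by
        rw [show Finset.Icc 1 N = Finset.Ico 1 (N+1) from (Finset.Ico_add_one_right_eq_Icc 1 N).symm,
          Finset.sum_Ico_eq_sum_range]
        have h1 : ∀ k, c (1 + k) - c (1 + k - 1) = c (k+1) - c k := by
          intro k; congr 2 <;> omega
        rw [Finset.sum_congr rfl fun k _ => h1 k, show N + 1 - 1 = N from rfl]
        exact Finset.sum_range_sub c N
      rw [htel]
      have hc0 : c 0 = 0 := by rw [hc]; simp [lagGd]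
      have hcN : c N = 0 := by rw [hc]; simp [lagGd]
      rw [hc0, hcN, lagKeyC hρ]
      ring
    rw [← hsum]
    unfold lagDualObj
    apply HasDerivAt.fun_sum
    intro j hj
    have hQ : HasDerivAt (fun s => Function.update p i s j)
        (if j = i then (1:ℝ) else 0) (p i) := by
      rcases eq_or_ne j i with h | h
      · subst h; simp only [Function.update_self, if_pos rfl]; exact hasDerivAt_id _
      · simp only [Function.update_of_ne h, if_neg h]; exact hasDerivAt_const _ _
    have hcomp : ∀ k m, HasDerivAt
        (fun s => lagG α ρ k (lagBdry α β N (Function.update p i s) φ m))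
        ((r m)^k * ρ (r m) * lagGd N p φ i m) (p i) := by
      intro k m
      have h2 : HasDerivAt (lagG α ρ k) ((r m)^k * ρ (r m))
          (lagBdry α β N (Function.update p i (p i)) φ m) := by
        rw [hgv m]; exact lagG_deriv hρ k (r m)
      exact h2.comp (p i) (bdry_deriv α β N p φ i hi1 hiN hord m)
    have hrw : (fun s => (∫ x in lagBdry α β N (Function.update p i s) φ (j - 1)..lagBdry α β N (Function.update p i s) φ j,
          (1 / 2 : ℝ) * (Function.update p i s j - x) ^ 2 * ρ x)
        + (1 / (N : ℝ)
            - ∫ x in lagBdry α β N (Function.update p i s) φ (j - 1)..lagBdry α β N (Function.update p i s) φ j, ρ x) * φ j)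
        = fun s => (Function.update p i s j) ^ 2 / 2
              * (lagG α ρ 0 (lagBdry α β N (Function.update p i s) φ j)
                - lagG α ρ 0 (lagBdry α β N (Function.update p i s) φ (j-1)))
            - (Function.update p i s j)
              * (lagG α ρ 1 (lagBdry α β N (Function.update p i s) φ j)
                - lagG α ρ 1 (lagBdry α β N (Function.update p i s) φ (j-1)))
            + (lagG α ρ 2 (lagBdry α β N (Function.update p i s) φ j)
                - lagG α ρ 2 (lagBdry α β N (Function.update p i s) φ (j-1))) / 2
            + (1 / (N : ℝ)
              - (lagG α ρ 0 (lagBdry α β N (Function.update p i s) φ j)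
                - lagG α ρ 0 (lagBdry α β N (Function.update p i s) φ (j-1)))) * φ j := by
      funext s
      rw [lagKeyA hρ, lagKeyB hρ]
    rw [hrw]
    have H := (((((hQ.pow 2).div_const 2).mul ((hcomp 0 j).sub (hcomp 0 (j-1)))).sub
        (hQ.mul ((hcomp 1 j).sub (hcomp 1 (j-1))))).add
        (((hcomp 2 j).sub (hcomp 2 (j-1))).div_const 2)).add
        (((hasDerivAt_const (p i) (1/(N:ℝ))).sub ((hcomp 0 j).sub (hcomp 0 (j-1)))).mul_const (φ j))
    convert H using 1
    · rfl
    simp only [hd, Pi.sub_apply, Pi.pow_apply, Function.update_eq_self, hgv, ← hr]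
    push_cast
    ring
  · -- algebraic identity
    intro ha
    have hint1 : IntervalIntegrable (fun x => p i * ρ x) volume
        (lagBdry α β N p φ (i-1)) (lagBdry α β N p φ i) :=
      (continuous_const.mul hρ).intervalIntegrable _ _
    have hint2 : IntervalIntegrable (fun x => x * ρ x) volume
        (lagBdry α β N p φ (i-1)) (lagBdry α β N p φ i) :=
      (continuous_id.mul hρ).intervalIntegrable _ _
    have hlin : (∫ x in lagBdry α β N p φ (i - 1)..lagBdry α β N p φ i, (p i - x) * ρ x)
        = p i * (∫ x in lagBdry α β N p φ (i - 1)..lagBdry α β N p φ i, ρ x)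
          - ∫ x in lagBdry α β N p φ (i - 1)..lagBdry α β N p φ i, x * ρ x := by
      rw [show (fun x => (p i - x) * ρ x) = fun x => p i * ρ x - x * ρ x from
          funext fun x => by ring,
        intervalIntegral.integral_sub hint1 hint2, intervalIntegral.integral_const_mul]
    rw [hlin]
    field_simp
end
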